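/- arXiv:1803.01665 — 2 statements merged into one kernel-verified Lean document; each statement's English description precedes it below -/
import Mathlib

section
/- For each fixed γ ∈ (0,1), the map w ↦ Q_γ(w) is continuous and strictly increasing on T; moreover Q_γ(w) → −∞ as w decreases to a_1 (along T) and Q_γ(w) → ∞ as w increases to b_K (along T). -/
/-!
Conditioning `N(θ, ς²)` on `T` gives a probability measure without atoms whose cdf is
`F_θ := F^T_{θ,ς²}`, so `F_θ` is continuous, tends to `0` and `1` at the ends of `T`, and is
strictly increasing on `T` because `N(θ, ς²)` charges every open set. The Gaussian location
family has monotone likelihood ratio `exp ((θ₂ - θ₁) (2x - θ₁ - θ₂) / 2ς²)`, so raising `θ`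
moves mass of `T` from below `w` to above it: `θ ↦ F_θ w` is strictly decreasing for `w ∈ T`.
The level set `F_{Q w} w = γ` of a family that is strictly decreasing in `θ` and continuous
and increasing in `w` is the graph of a continuous increasing function, and comparing
`F_θ w` with `γ ∈ (0, 1)` near the ends of `T` sends `Q` to `∓∞`.
-/

open Filter MeasureTheory ProbabilityTheory Set

/-- The cdf of the normal distribution with mean `θ` and variance `ς²`, truncated to the
set `T`: `F^T_{θ,ς²}(w) = P(V ≤ w ∧ V ∈ T) / P(V ∈ T)` for `V ~ N(θ, ς²)`. -/
noncomputable def truncNormalCDF (ς : ℝ) (T : Set ℝ) (θ w : ℝ) : ℝ :=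
  ((gaussianReal θ (Real.toNNReal (ς ^ 2))) (Set.Iic w ∩ T)).toReal /
    ((gaussianReal θ (Real.toNNReal (ς ^ 2))) T).toReal

open Topology
open scoped NNReal ENNReal

namespace ProbabilityTheory

section Cdf

variable {ν : Measure ℝ} [IsProbabilityMeasure ν]

lemma continuous_cdf [NullSingletonClass ν] : Continuous (cdf ν) := by
  refine continuous_iff_continuousAt.2 fun x => ?_
  rw [(cdf ν).mono.continuousAt_iff_leftLim_eq_rightLim, StieltjesFunction.rightLim_eq]
  have h := (cdf ν).measure_singleton x
  rw [measure_cdf, measure_singleton, eq_comm, ENNReal.ofReal_eq_zero, sub_nonpos] at h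
  exact le_antisymm ((cdf ν).mono.leftLim_le le_rfl) h

lemma cdf_lt_cdf {x y : ℝ} (h : ν (Ioc x y) ≠ 0) : cdf ν x < cdf ν y := by
  rwa [← measure_cdf ν, StieltjesFunction.measure_Ioc, ne_eq, ENNReal.ofReal_eq_zero, not_le,
    sub_pos] at h

lemma tendsto_cdf_comap_coe_nhds_zero [NullSingletonClass ν] {e : EReal}
    (he : ν (Real.toEReal ⁻¹' Iic e) = 0) :
    Tendsto (cdf ν) (comap Real.toEReal (𝓝 e)) (𝓝 0) := by
  induction e using EReal.rec with
  | bot => exact (tendsto_cdf_atBot ν).comp (EReal.tendsto_coe_nhds_bot_iff.1 tendsto_comap)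
  | coe r =>
    have hr : cdf ν r = 0 := by
      rw [cdf_eq_real, measureReal_def, show Iic r = Real.toEReal ⁻¹' Iic r by simp, he,
        ENNReal.toReal_zero]
    rw [← EReal.isEmbedding_coe.nhds_eq_comap, ← hr]
    exact continuous_cdf.tendsto r
  | top => simp at he

lemma tendsto_cdf_comap_coe_nhds_one [NullSingletonClass ν] {e : EReal}
    (he : ν (Real.toEReal ⁻¹' Ici e) = 0) :
    Tendsto (cdf ν) (comap Real.toEReal (𝓝 e)) (𝓝 1) := by
  induction e using EReal.rec with
  | bot => simp at he
  | coe r =>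
    have hr : cdf ν r = 1 := by
      have hIoi : ν (Iic r)ᶜ = 0 :=
        measure_mono_null (fun x hx => EReal.coe_le_coe_iff.2 (le_of_lt (not_le.1 hx))) he
      rw [cdf_eq_real, measureReal_def, (prob_compl_eq_zero_iff measurableSet_Iic).1 hIoi,
        ENNReal.toReal_one]
    rw [← EReal.isEmbedding_coe.nhds_eq_comap, ← hr]
    exact continuous_cdf.tendsto r
  | top => exact (tendsto_cdf_atTop ν).comp (EReal.tendsto_coe_nhds_top_iff.1 tendsto_comap)

end Cdf

section Gaussian

variable {v : ℝ≥0}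

lemma gaussianReal_ne_zero_of_isOpen (hv : v ≠ 0) (θ : ℝ) {S : Set ℝ} (hS : IsOpen S)
    (hne : S.Nonempty) : gaussianReal θ v S ≠ 0 :=
  fun h => hS.measure_ne_zero volume hne (gaussianReal_absolutelyContinuous' θ hv h)

lemma gaussianPDF_eq_ofReal_exp_mul (θ₁ θ₂ x : ℝ) :
    gaussianPDF θ₂ v x =
      ENNReal.ofReal (Real.exp ((θ₂ - θ₁) * (2 * x - θ₁ - θ₂) / (2 * v))) *
        gaussianPDF θ₁ v x := by
  rw [gaussianPDF, gaussianPDF, ← ENNReal.ofReal_mul (Real.exp_nonneg _), gaussianPDFReal,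
    gaussianPDFReal, mul_left_comm, ← Real.exp_add]
  congr 3
  field_simp
  ring

/-- The density ratio `g` of `N(θ₂, v)` to `N(θ₁, v)` is increasing, so `μ₂ A ≤ g w * μ₁ A`
and `g w * μ₁ B < μ₂ B`. -/
theorem gaussianReal_mul_lt_mul (hv : v ≠ 0) {θ₁ θ₂ w : ℝ} (h12 : θ₁ < θ₂) {A B : Set ℝ}
    (hB : MeasurableSet B) (hAw : A ⊆ Iic w) (hBw : B ⊆ Ioi w)
    (hA0 : gaussianReal θ₁ v A ≠ 0) (hB0 : gaussianReal θ₁ v B ≠ 0) :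
    gaussianReal θ₁ v B * gaussianReal θ₂ v A < gaussianReal θ₂ v B * gaussianReal θ₁ v A := by
  set g : ℝ → ℝ≥0∞ := fun x =>
    ENNReal.ofReal (Real.exp ((θ₂ - θ₁) * (2 * x - θ₁ - θ₂) / (2 * v)))
  have hg : StrictMono g := fun x y hxy => by
    refine (ENNReal.ofReal_lt_ofReal_iff (Real.exp_pos _)).2 (Real.exp_lt_exp.2 ?_)
    gcongr
  have hμ₂ (S : Set ℝ) : gaussianReal θ₂ v S = ∫⁻ x in S, g x * gaussianPDF θ₁ v x := by
    simp only [gaussianReal_apply _ hv, g, ← gaussianPDF_eq_ofReal_exp_mul]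
  have hμ₁ (S : Set ℝ) : g w * gaussianReal θ₁ v S = ∫⁻ x in S, g w * gaussianPDF θ₁ v x := by
    rw [gaussianReal_apply _ hv, lintegral_const_mul _ (measurable_gaussianPDF θ₁ v)]
  have hA : gaussianReal θ₂ v A ≤ g w * gaussianReal θ₁ v A := by
    rw [hμ₂, hμ₁]
    exact setLIntegral_mono (by fun_prop) fun x hx => by gcongr; exact hg.monotone (hAw hx)
  have hB : g w * gaussianReal θ₁ v B < gaussianReal θ₂ v B := by
    rw [hμ₂, hμ₁]
    refine setLIntegral_strict_mono hB (fun h => hB0 (gaussianReal_absolutelyContinuous θ₁ hv h))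
      (by fun_prop) (by rw [← hμ₁]; finiteness) (ae_of_all _ fun x hx => ?_)
    exact ENNReal.mul_lt_mul_left (gaussianPDF_pos θ₁ hv x).ne' ENNReal.ofReal_ne_top
      (hg (hBw hx))
  calc gaussianReal θ₁ v B * gaussianReal θ₂ v A
      ≤ gaussianReal θ₁ v B * (g w * gaussianReal θ₁ v A) := by gcongr
    _ = g w * gaussianReal θ₁ v B * gaussianReal θ₁ v A := by ring
    _ < gaussianReal θ₂ v B * gaussianReal θ₁ v A :=
      ENNReal.mul_lt_mul_left hA0 (measure_ne_top _ _) hB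

end Gaussian

end ProbabilityTheory

lemma IsOpen.inter_Ioi_nonempty {T : Set ℝ} (hT : IsOpen T) {w : ℝ} (hw : w ∈ T) :
    (T ∩ Ioi w).Nonempty :=
  nonempty_of_mem (inter_mem (mem_nhdsWithin_of_mem_nhds (hT.mem_nhds hw)) self_mem_nhdsWithin)

lemma IsOpen.inter_Iio_nonempty {T : Set ℝ} (hT : IsOpen T) {w : ℝ} (hw : w ∈ T) :
    (T ∩ Iio w).Nonempty :=
  nonempty_of_mem (inter_mem (mem_nhdsWithin_of_mem_nhds (hT.mem_nhds hw)) self_mem_nhdsWithin)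

noncomputable def truncNormal (ς : ℝ) (T : Set ℝ) (θ : ℝ) : Measure ℝ :=
  (gaussianReal θ (ς ^ 2).toNNReal)[|T]

section TruncNormal

variable {ς : ℝ} {T : Set ℝ}

lemma Real.toNNReal_sq_ne_zero (hς : ς ≠ 0) : (ς ^ 2).toNNReal ≠ 0 := by
  simpa using hς

lemma truncNormal_apply (hT : MeasurableSet T) (θ : ℝ) (S : Set ℝ) :
    truncNormal ς T θ S =
      (gaussianReal θ (ς ^ 2).toNNReal T)⁻¹ * gaussianReal θ (ς ^ 2).toNNReal (T ∩ S) :=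
  cond_apply hT _ S

lemma truncNormal_eq_zero_of_disjoint (hT : MeasurableSet T) (θ : ℝ) {S : Set ℝ}
    (hS : Disjoint T S) : truncNormal ς T θ S = 0 := by
  rw [truncNormal_apply hT, hS.inter_eq, measure_empty, mul_zero]

lemma isProbabilityMeasure_truncNormal (hς : ς ≠ 0) (hT : IsOpen T) (hne : T.Nonempty)
    (θ : ℝ) : IsProbabilityMeasure (truncNormal ς T θ) :=
  cond_isProbabilityMeasure
    (gaussianReal_ne_zero_of_isOpen (Real.toNNReal_sq_ne_zero hς) θ hT hne)

lemma nullSingletonClass_truncNormal (hς : ς ≠ 0) (θ : ℝ) :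
    NullSingletonClass (truncNormal ς T θ) :=
  ⟨fun x => cond_absolutelyContinuous
    (gaussianReal_absolutelyContinuous θ (Real.toNNReal_sq_ne_zero hς) (measure_singleton x))⟩

lemma truncNormalCDF_eq_cdf (hς : ς ≠ 0) (hT : IsOpen T) (hne : T.Nonempty) (θ : ℝ) :
    truncNormalCDF ς T θ = cdf (truncNormal ς T θ) := by
  have := isProbabilityMeasure_truncNormal hς hT hne θ
  ext w
  rw [cdf_eq_real, measureReal_def, truncNormal_apply hT.measurableSet, ENNReal.toReal_mul,
    ENNReal.toReal_inv, truncNormalCDF, inter_comm, div_eq_inv_mul]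

lemma continuous_truncNormalCDF (hς : ς ≠ 0) (hT : IsOpen T) (hne : T.Nonempty) (θ : ℝ) :
    Continuous (truncNormalCDF ς T θ) := by
  have := isProbabilityMeasure_truncNormal hς hT hne θ
  have := nullSingletonClass_truncNormal (T := T) hς θ
  rw [truncNormalCDF_eq_cdf hς hT hne]
  exact continuous_cdf

lemma strictMonoOn_truncNormalCDF (hς : ς ≠ 0) (hT : IsOpen T) (θ : ℝ) :
    StrictMonoOn (truncNormalCDF ς T θ) T := by
  intro w₁ hw₁ w₂ _ h12
  have := isProbabilityMeasure_truncNormal hς hT ⟨w₁, hw₁⟩ θ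
  rw [truncNormalCDF_eq_cdf hς hT ⟨w₁, hw₁⟩]
  refine cdf_lt_cdf ?_
  rw [truncNormal_apply hT.measurableSet]
  refine mul_ne_zero (ENNReal.inv_ne_zero.2 (measure_ne_top _ _)) fun h => ?_
  have hopen : IsOpen (T ∩ Iio w₂ ∩ Ioi w₁) := (hT.inter isOpen_Iio).inter isOpen_Ioi
  refine gaussianReal_ne_zero_of_isOpen (Real.toNNReal_sq_ne_zero hς) θ hopen
    ((hT.inter isOpen_Iio).inter_Ioi_nonempty ⟨hw₁, h12⟩) (measure_mono_null ?_ h)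
  exact fun x ⟨⟨hxT, hx₂⟩, hx₁⟩ => ⟨hxT, hx₁, hx₂.le⟩

lemma truncNormalCDF_strictAnti (hς : ς ≠ 0) (hT : IsOpen T) {w : ℝ} (hw : w ∈ T) :
    StrictAnti fun θ => truncNormalCDF ς T θ w := by
  intro θ₁ θ₂ h12
  show truncNormalCDF ς T θ₂ w < truncNormalCDF ς T θ₁ w
  have hv := Real.toNNReal_sq_ne_zero hς
  set μ : ℝ → Measure ℝ := fun θ => gaussianReal θ (ς ^ 2).toNNReal
  have hA0 (θ : ℝ) : μ θ (Iic w ∩ T) ≠ 0 := fun h =>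
    gaussianReal_ne_zero_of_isOpen hv θ (hT.inter isOpen_Iio) (hT.inter_Iio_nonempty hw)
      (measure_mono_null (fun x (hx : x ∈ T ∩ Iio w) =>
        (⟨mem_Iic.2 (mem_Iio.1 hx.2).le, hx.1⟩ : x ∈ Iic w ∩ T)) h)
  have hB0 : μ θ₁ (T \ Iic w) ≠ 0 := fun h =>
    gaussianReal_ne_zero_of_isOpen hv θ₁ (hT.inter isOpen_Ioi) (hT.inter_Ioi_nonempty hw)
      (measure_mono_null (fun x (hx : x ∈ T ∩ Ioi w) =>
        (⟨hx.1, (mem_Ioi.1 hx.2).not_ge⟩ : x ∈ T \ Iic w)) h)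
  have hmlr := ENNReal.toReal_strict_mono (by finiteness) <|
    gaussianReal_mul_lt_mul hv h12 (hT.measurableSet.diff measurableSet_Iic) inter_subset_left
      (fun x hx => mem_Ioi.2 (not_le.1 hx.2)) (hA0 θ₁) hB0
  simp only [ENNReal.toReal_mul] at hmlr
  have hF (θ : ℝ) : truncNormalCDF ς T θ w = (μ θ (Iic w ∩ T)).toReal /
      ((μ θ (Iic w ∩ T)).toReal + (μ θ (T \ Iic w)).toReal) := by
    rw [truncNormalCDF, ← ENNReal.toReal_add (measure_ne_top _ _) (measure_ne_top _ _),
      inter_comm, measure_inter_add_sdiff _ measurableSet_Iic]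
  have hpos (θ : ℝ) : 0 < (μ θ (Iic w ∩ T)).toReal :=
    ENNReal.toReal_pos (hA0 θ) (measure_ne_top _ _)
  have hden (θ : ℝ) : 0 < (μ θ (Iic w ∩ T)).toReal + (μ θ (T \ Iic w)).toReal :=
    add_pos_of_pos_of_nonneg (hpos θ) ENNReal.toReal_nonneg
  rw [hF, hF, div_lt_div_iff₀ (hden θ₂) (hden θ₁)]
  nlinarith

lemma tendsto_truncNormalCDF_comap_nhds_zero (hς : ς ≠ 0) (hT : IsOpen T) (hne : T.Nonempty)
    {e : EReal} (he : ∀ x ∈ T, e < x) (θ : ℝ) :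
    Tendsto (truncNormalCDF ς T θ) (comap Real.toEReal (𝓝 e)) (𝓝 0) := by
  have := isProbabilityMeasure_truncNormal hς hT hne θ
  have := nullSingletonClass_truncNormal (T := T) hς θ
  rw [truncNormalCDF_eq_cdf hς hT hne]
  exact tendsto_cdf_comap_coe_nhds_zero <| truncNormal_eq_zero_of_disjoint hT.measurableSet θ <|
    disjoint_left.2 fun x hxT hxe => (he x hxT).not_ge hxe

lemma tendsto_truncNormalCDF_comap_nhds_one (hς : ς ≠ 0) (hT : IsOpen T) (hne : T.Nonempty)
    {e : EReal} (he : ∀ x ∈ T, (x : EReal) < e) (θ : ℝ) :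
    Tendsto (truncNormalCDF ς T θ) (comap Real.toEReal (𝓝 e)) (𝓝 1) := by
  have := isProbabilityMeasure_truncNormal hς hT hne θ
  have := nullSingletonClass_truncNormal (T := T) hς θ
  rw [truncNormalCDF_eq_cdf hς hT hne]
  exact tendsto_cdf_comap_coe_nhds_one <| truncNormal_eq_zero_of_disjoint hT.measurableSet θ <|
    disjoint_left.2 fun x hxT hxe => (he x hxT).not_ge hxe

end TruncNormal

section LevelSet

variable {F : ℝ → ℝ → ℝ} {T : Set ℝ} {Q : ℝ → ℝ} {γ : ℝ}

lemma continuousOn_of_apply_eq_of_strictAnti (hanti : ∀ w ∈ T, StrictAnti (F · w))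
    (hQ : ∀ w ∈ T, F (Q w) w = γ) (hcont : ∀ θ, Continuous (F θ)) : ContinuousOn Q T := by
  intro w₀ hw₀
  refine tendsto_order.2 ⟨fun c hc => ?_, fun c hc => ?_⟩
  · have hγc : γ < F c w₀ := hQ w₀ hw₀ ▸ hanti w₀ hw₀ hc
    filter_upwards [nhdsWithin_le_nhds (((hcont c).tendsto w₀).eventually_const_lt hγc),
      self_mem_nhdsWithin] with w hw hwT
    exact (StrictAnti.lt_iff_gt (hanti w hwT)).1 (hQ w hwT ▸ hw)
  · have hcγ : F c w₀ < γ := hQ w₀ hw₀ ▸ hanti w₀ hw₀ hc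
    filter_upwards [nhdsWithin_le_nhds (((hcont c).tendsto w₀).eventually_lt_const hcγ),
      self_mem_nhdsWithin] with w hw hwT
    exact (StrictAnti.lt_iff_gt (hanti w hwT)).1 (hQ w hwT ▸ hw)

lemma strictMonoOn_of_apply_eq_of_strictAnti (hanti : ∀ w ∈ T, StrictAnti (F · w))
    (hQ : ∀ w ∈ T, F (Q w) w = γ) (hmono : ∀ θ, StrictMonoOn (F θ) T) : StrictMonoOn Q T :=
  fun w₁ hw₁ w₂ hw₂ h12 => (StrictAnti.lt_iff_gt (hanti w₁ hw₁)).1 <| by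
    rw [hQ w₁ hw₁, ← hQ w₂ hw₂]
    exact hmono _ hw₁ hw₂ h12

lemma tendsto_atBot_of_apply_eq_of_strictAnti (hanti : ∀ w ∈ T, StrictAnti (F · w))
    (hQ : ∀ w ∈ T, F (Q w) w = γ) {l : Filter ℝ} (hl : l ≤ 𝓟 T) (hγ : 0 < γ)
    (hlim : ∀ θ, Tendsto (F θ) l (𝓝 0)) : Tendsto Q l atBot :=
  tendsto_atBot.2 fun θ => by
    filter_upwards [(hlim θ).eventually_lt_const hγ, hl (mem_principal_self T)] with w hw hwT
    exact ((StrictAnti.lt_iff_gt (hanti w hwT)).1 (hQ w hwT ▸ hw)).le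

lemma tendsto_atTop_of_apply_eq_of_strictAnti (hanti : ∀ w ∈ T, StrictAnti (F · w))
    (hQ : ∀ w ∈ T, F (Q w) w = γ) {l : Filter ℝ} (hl : l ≤ 𝓟 T) (hγ : γ < 1)
    (hlim : ∀ θ, Tendsto (F θ) l (𝓝 1)) : Tendsto Q l atTop :=
  tendsto_atTop.2 fun θ => by
    filter_upwards [(hlim θ).eventually_const_lt hγ, hl (mem_principal_self T)] with w hw hwT
    exact ((StrictAnti.lt_iff_gt (hanti w hwT)).1 (hQ w hwT ▸ hw)).le

end LevelSet

lemma lt_and_lt_of_mem_biUnion_Ioo {α : Type*} [Preorder α] {K : ℕ} {a b : ℕ → α}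
    (hab : ∀ i < K, a i < b i) (hba : ∀ i, i + 1 < K → b i < a (i + 1)) {y : α}
    (hy : y ∈ ⋃ i ∈ Finset.range K, Ioo (a i) (b i)) : a 0 < y ∧ y < b (K - 1) := by
  simp only [mem_iUnion, Finset.mem_range] at hy
  obtain ⟨i, hi, hai, hbi⟩ := hy
  have ha : ∀ j < K, a 0 ≤ a j := by
    intro j
    induction j with
    | zero => exact fun _ => le_rfl
    | succ j ih => exact fun hj => (ih (by omega)).trans ((hab j (by omega)).trans (hba j hj)).le
  have hb : ∀ j, i ≤ j → j < K → b i ≤ b j := by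
    intro j hij
    induction j, hij using Nat.le_induction with
    | base => exact fun _ => le_rfl
    | succ j _ ih => exact fun hj => (ih (by omega)).trans ((hba j hj).trans (hab (j + 1) hj)).le
  exact ⟨(ha i hi).trans_lt hai, hbi.trans_le (hb (K - 1) (by omega) (by omega))⟩

/-- For each fixed `γ ∈ (0,1)`, the map `w ↦ Q_γ(w)` is continuous and strictly
increasing on `T`; moreover `Q_γ(w) → −∞` as `w` decreases to `a 0` along `T` and
`Q_γ(w) → ∞` as `w` increases to `b (K-1)` along `T`.  Here `Q : ℝ → ℝ` is any function
such that `Q w` solves `F^T_{Q w,ς²}(w) = γ` for every `w ∈ T`, and approaching an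
(extended-real) endpoint along `T` is expressed by the filter
`comap Real.toEReal (nhds endpoint) ⊓ principal T`. -/
theorem stmt_5
    (ς : ℝ) (hς : 0 < ς) (K : ℕ) (hK : 1 ≤ K) (a b : ℕ → EReal)
    (hab : ∀ i < K, a i < b i) (hba : ∀ i, i + 1 < K → b i < a (i + 1))
    (T : Set ℝ)
    (hT : T = ⋃ i ∈ Finset.range K, {x : ℝ | a i < (x : EReal) ∧ (x : EReal) < b i})
    (γ : ℝ) (hγ : γ ∈ Set.Ioo (0 : ℝ) 1) (Q : ℝ → ℝ)
    (hQ : ∀ w ∈ T, truncNormalCDF ς T (Q w) w = γ) :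
    ContinuousOn Q T ∧ StrictMonoOn Q T ∧
      Tendsto Q (comap Real.toEReal (nhds (a 0)) ⊓ Filter.principal T) atBot ∧
      Tendsto Q (comap Real.toEReal (nhds (b (K - 1))) ⊓ Filter.principal T) atTop := by
  replace hT : T = Real.toEReal ⁻¹' ⋃ i ∈ Finset.range K, Ioo (a i) (b i) := by
    rw [hT]; ext; simp
  have hTo : IsOpen T :=
    hT ▸ (isOpen_biUnion fun _ _ => isOpen_Ioo).preimage continuous_coe_real_ereal
  have hTne : T.Nonempty := by
    obtain ⟨x, hx⟩ := EReal.exists_between_coe_real (hab 0 hK)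
    exact ⟨x, hT ▸ mem_biUnion (Finset.mem_range.2 hK) hx⟩
  have hbounds (x : ℝ) (hx : x ∈ T) := lt_and_lt_of_mem_biUnion_Ioo hab hba (hT ▸ hx)
  have hanti (w : ℝ) (hw : w ∈ T) := truncNormalCDF_strictAnti hς.ne' hTo hw
  refine ⟨continuousOn_of_apply_eq_of_strictAnti hanti hQ
      (continuous_truncNormalCDF hς.ne' hTo hTne),
    strictMonoOn_of_apply_eq_of_strictAnti hanti hQ (strictMonoOn_truncNormalCDF hς.ne' hTo),
    tendsto_atBot_of_apply_eq_of_strictAnti hanti hQ inf_le_right hγ.1 fun θ => ?_,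
    tendsto_atTop_of_apply_eq_of_strictAnti hanti hQ inf_le_right hγ.2 fun θ => ?_⟩
  · exact (tendsto_truncNormalCDF_comap_nhds_zero hς.ne' hTo hTne
      (fun x hx => (hbounds x hx).1) θ).mono_left inf_le_left
  · exact (tendsto_truncNormalCDF_comap_nhds_one hς.ne' hTo hTne
      (fun x hx => (hbounds x hx).2) θ).mono_left inf_le_left
end

section
/- Suppose p_* > 0. Then for every w ∈ T and every γ ∈ (0,1), w − ς·Φ^{−1}(1 − p_*(1−γ)) ≤ Q_γ(w) ≤ w − ς·Φ^{−1}(p_* γ). -/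
/-!
Write `θ = Q_γ(w)`, `z = (w - θ) / ς` and `B = P_θ(T) ≥ p_*`. Splitting `T` at `w`, the defining
equation `P_θ(V ≤ w, V ∈ T) = γ B` gives `γ B ≤ Φ(z)` and `(1 - γ) B ≤ 1 - Φ(z)`, hence
`p_* γ ≤ Φ(z) ≤ 1 - p_* (1 - γ)`; applying the increasing map `Φ⁻¹` yields both bounds on `θ`.
-/

open Filter MeasureTheory ProbabilityTheory Set

/-- The standard normal cumulative distribution function. -/
noncomputable def stdNormalCDF (x : ℝ) : ℝ :=
  ∫ t in Set.Iic x, (Real.sqrt (2 * Real.pi))⁻¹ * Real.exp (-(t ^ 2) / 2)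

/-- The inverse `Φ^{−1}` of the standard normal cdf on `(0,1)`. -/
noncomputable def stdNormalCDFInv (p : ℝ) : ℝ :=
  Function.invFun stdNormalCDF p

lemma stdNormalCDF_eq_integral (x : ℝ) :
    stdNormalCDF x = ∫ t in Iic x, gaussianPDFReal 0 1 t := by
  simp [stdNormalCDF, gaussianPDFReal]

lemma stdNormalCDF_eq_cdf : stdNormalCDF = cdf (gaussianReal 0 1) := by
  ext x
  rw [cdf_eq_real, measureReal_def, gaussianReal_apply_eq_integral 0 one_ne_zero,
    ENNReal.toReal_ofReal (setIntegral_nonneg measurableSet_Iic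
      fun t _ ↦ gaussianPDFReal_nonneg 0 1 t), stdNormalCDF_eq_integral]

lemma stdNormalCDF_sub_stdNormalCDF (x y : ℝ) :
    stdNormalCDF y - stdNormalCDF x = ∫ t in x..y, gaussianPDFReal 0 1 t := by
  simp only [stdNormalCDF_eq_integral]
  exact intervalIntegral.integral_Iic_sub_Iic (integrable_gaussianPDFReal 0 1).integrableOn
    (integrable_gaussianPDFReal 0 1).integrableOn

lemma strictMono_stdNormalCDF : StrictMono stdNormalCDF := fun x y hxy ↦ by
  have hpos : 0 < ∫ t in x..y, gaussianPDFReal 0 1 t :=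
    intervalIntegral.intervalIntegral_pos_of_pos
      (integrable_gaussianPDFReal 0 1).intervalIntegrable
      (fun t ↦ gaussianPDFReal_pos 0 1 t one_ne_zero) hxy
  linarith [stdNormalCDF_sub_stdNormalCDF x y]

lemma continuous_stdNormalCDF : Continuous stdNormalCDF := by
  have h : stdNormalCDF =
      fun y ↦ (∫ t in (0 : ℝ)..y, gaussianPDFReal 0 1 t) + stdNormalCDF 0 := by
    ext y
    linarith [stdNormalCDF_sub_stdNormalCDF 0 y]
  rw [h]
  exact (intervalIntegral.continuous_primitive
    (fun _ _ ↦ (integrable_gaussianPDFReal 0 1).intervalIntegrable) 0).add continuous_const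

lemma Ioo_subset_range_stdNormalCDF : Ioo 0 1 ⊆ range stdNormalCDF := fun p hp ↦ by
  have h0 := stdNormalCDF_eq_cdf ▸ tendsto_cdf_atBot (gaussianReal 0 1)
  have h1 := stdNormalCDF_eq_cdf ▸ tendsto_cdf_atTop (gaussianReal 0 1)
  exact mem_range_of_exists_le_of_exists_ge continuous_stdNormalCDF
    ((h0.eventually_le_const hp.1).exists) ((h1.eventually_const_le hp.2).exists)

lemma stdNormalCDF_stdNormalCDFInv {p : ℝ} (hp : p ∈ Ioo 0 1) :
    stdNormalCDF (stdNormalCDFInv p) = p :=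
  Function.invFun_eq (Ioo_subset_range_stdNormalCDF hp)

lemma stdNormalCDFInv_le_iff {p : ℝ} (hp : p ∈ Ioo 0 1) (z : ℝ) :
    stdNormalCDFInv p ≤ z ↔ p ≤ stdNormalCDF z := by
  conv_rhs => rw [← stdNormalCDF_stdNormalCDFInv hp]
  exact strictMono_stdNormalCDF.le_iff_le.symm

lemma le_stdNormalCDFInv_iff {p : ℝ} (hp : p ∈ Ioo 0 1) (z : ℝ) :
    z ≤ stdNormalCDFInv p ↔ stdNormalCDF z ≤ p := by
  conv_rhs => rw [← stdNormalCDF_stdNormalCDFInv hp]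
  exact strictMono_stdNormalCDF.le_iff_le.symm

lemma gaussianReal_map_standardize {ς : ℝ} (hς : 0 < ς) (θ : ℝ) :
    (gaussianReal θ (ς ^ 2).toNNReal).map (fun x ↦ (x - θ) / ς) = gaussianReal 0 1 := by
  have h : (fun x ↦ (x - θ) / ς) = (· / ς) ∘ (· - θ) := rfl
  rw [h, ← Measure.map_map (by fun_prop) (by fun_prop), gaussianReal_map_sub_const,
    gaussianReal_map_div_const, sub_self, zero_div]
  congr
  ext
  simp [Real.coe_toNNReal _ (sq_nonneg ς), hς.ne']

lemma cdf_gaussianReal {ς : ℝ} (hς : 0 < ς) (θ w : ℝ) :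
    cdf (gaussianReal θ (ς ^ 2).toNNReal) w = stdNormalCDF ((w - θ) / ς) := by
  rw [stdNormalCDF_eq_cdf, cdf_eq_real, cdf_eq_real, ← gaussianReal_map_standardize hς θ,
    map_measureReal_apply (by fun_prop) measurableSet_Iic]
  congr
  ext x
  simp [div_le_div_iff_of_pos_right hς]

lemma cdf_mem_Icc_of_div_measureReal_eq {μ : Measure ℝ} [IsProbabilityMeasure μ] {T : Set ℝ}
    {w γ p : ℝ} (hp : 0 < p) (hpT : p ≤ μ.real T) (hγ : μ.real (Iic w ∩ T) / μ.real T = γ) :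
    cdf μ w ∈ Icc (p * γ) (1 - p * (1 - γ)) := by
  have hT : 0 < μ.real T := hp.trans_le hpT
  have hA : μ.real (Iic w ∩ T) = γ * μ.real T := by rw [← hγ, div_mul_cancel₀ _ hT.ne']
  have hA_le_T : μ.real (Iic w ∩ T) ≤ μ.real T := measureReal_mono inter_subset_right
  have hA_le_cdf : μ.real (Iic w ∩ T) ≤ cdf μ w :=
    cdf_eq_real μ w ▸ measureReal_mono inter_subset_left
  have hT_le : μ.real T ≤ μ.real (Iic w ∩ T) + (1 - cdf μ w) := by
    have hIoi : μ.real (Ioi w) = 1 - cdf μ w := by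
      rw [← compl_Iic, measureReal_compl measurableSet_Iic, probReal_univ, cdf_eq_real]
    calc μ.real T ≤ μ.real (Iic w ∩ T ∪ Ioi w) :=
          measureReal_mono fun x hx ↦ (le_or_gt x w).imp (⟨·, hx⟩) id
      _ ≤ μ.real (Iic w ∩ T) + μ.real (Ioi w) := measureReal_union_le _ _
      _ = μ.real (Iic w ∩ T) + (1 - cdf μ w) := by rw [hIoi]
  have hγ0 : 0 ≤ γ := by nlinarith [measureReal_nonneg (μ := μ) (s := Iic w ∩ T)]
  have hγ1 : γ ≤ 1 := by nlinarith
  constructor <;> nlinarith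

theorem stmt_11_general
    (ς : ℝ) (hς : 0 < ς)
    (T : Set ℝ)
    (pstar : ℝ)
    (hp : pstar = ⨅ ϑ : ℝ, ((gaussianReal ϑ (Real.toNNReal (ς ^ 2))) T).toReal)
    (hppos : 0 < pstar)
    (w : ℝ) (γ : ℝ) (hγ : γ ∈ Set.Ioo (0 : ℝ) 1)
    (Q : ℝ → ℝ) (hQ : ∀ γ' ∈ Set.Ioo (0 : ℝ) 1, truncNormalCDF ς T (Q γ') w = γ') :
    w - ς * stdNormalCDFInv (1 - pstar * (1 - γ)) ≤ Q γ ∧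
      Q γ ≤ w - ς * stdNormalCDFInv (pstar * γ) := by
  set μ := gaussianReal (Q γ) (ς ^ 2).toNNReal
  have hpT : pstar ≤ μ.real T :=
    hp ▸ ciInf_le ⟨0, by rintro _ ⟨ϑ, rfl⟩; exact ENNReal.toReal_nonneg⟩ (Q γ)
  have hp1 : pstar ≤ 1 := hpT.trans measureReal_le_one
  obtain ⟨hΦ_lower, hΦ_upper⟩ := cdf_mem_Icc_of_div_measureReal_eq hppos hpT (hQ γ hγ)
  rw [cdf_gaussianReal hς] at hΦ_lower hΦ_upper
  have hpγ_mem : pstar * γ ∈ Ioo 0 1 := ⟨mul_pos hppos hγ.1, by nlinarith [hγ.2]⟩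
  have hpγ_mem' : 1 - pstar * (1 - γ) ∈ Ioo 0 1 := ⟨by nlinarith [hγ.1], by nlinarith [hγ.2]⟩
  constructor
  · have h := (le_stdNormalCDFInv_iff hpγ_mem' _).2 hΦ_upper
    rw [div_le_iff₀ hς] at h
    linarith
  · have h := (stdNormalCDFInv_le_iff hpγ_mem _).2 hΦ_lower
    rw [le_div_iff₀ hς] at h
    linarith

/-- Suppose `p_* = inf_{ϑ} P(N(ϑ,ς²) ∈ T) > 0`.  Then for every `w ∈ T` and `γ ∈ (0,1)`,
`w − ς·Φ^{−1}(1 − p_*(1−γ)) ≤ Q_γ(w) ≤ w − ς·Φ^{−1}(p_* γ)`. -/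
theorem stmt_11
    (ς : ℝ) (hς : 0 < ς) (K : ℕ) (hK : 1 ≤ K) (a b : ℕ → EReal)
    (hab : ∀ i < K, a i < b i) (hba : ∀ i, i + 1 < K → b i < a (i + 1))
    (T : Set ℝ)
    (hT : T = ⋃ i ∈ Finset.range K, {x : ℝ | a i < (x : EReal) ∧ (x : EReal) < b i})
    (pstar : ℝ)
    (hp : pstar = ⨅ ϑ : ℝ, ((gaussianReal ϑ (Real.toNNReal (ς ^ 2))) T).toReal)
    (hppos : 0 < pstar)
    (w : ℝ) (hw : w ∈ T) (γ : ℝ) (hγ : γ ∈ Set.Ioo (0 : ℝ) 1)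
    (Q : ℝ → ℝ) (hQ : ∀ γ' ∈ Set.Ioo (0 : ℝ) 1, truncNormalCDF ς T (Q γ') w = γ') :
    w - ς * stdNormalCDFInv (1 - pstar * (1 - γ)) ≤ Q γ ∧
      Q γ ≤ w - ς * stdNormalCDFInv (pstar * γ) :=
  stmt_11_general ς hς T pstar hp hppos w γ hγ Q hQ
end
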